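/- arXiv:1507.01776 — 2 statements merged into one kernel-verified Lean document; each statement's English description precedes it below -/
import Mathlib

section
/- Let D be a finite set, R ⊆ D^n a nonempty n-ary relation, 𝒟 = 𝒟(R) the digraph constructed from R (balanced with level function lvl), and k ≥ 1. If a weakly connected component Δ' of the direct power 𝒟^k contains a tuple (c₁,…,c_k) with lvl(c₁) = … = lvl(c_k), then every tuple (d₁,…,d_k) in Δ' satisfies lvl(d₁) = … = lvl(d_k), and moreover either Δ' = Δ_k (the component of the diagonal) or Δ' consists of a single vertex. -/
/-!
Every edge of `𝒟^k` moves all coordinates one level up or all one level down, so the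
coordinates of the tuples in a component of `c` keep a common level.

If that component has a second vertex, then all `c i` have an out-edge or all have an in-edge.
In `𝒟` the word `(→←→)^m` climbs `m` blocks of a path `Q_S`: a single edge `a → b` is crossed
as `a → b ← a → b`, a zigzag as it is. Hence every vertex with an out-edge is reached from any
base vertex `d₀` by climbing `(→←→)^(n+2)` to the top of its path and then descending the
reverse of some `(→←→)^m`; dually, every vertex with an in-edge is reached from any top vertex
by descending to a base vertex and climbing some `(→←→)^m`. Since the `c i` share a level, they
share `m`, so these walks run in parallel and form a walk in `𝒟^k` from a diagonal vertex to `c`.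
-/

open scoped NNRat

/-- A homomorphism between digraphs given by their edge relations. -/
def IsDigraphHom {V₁ V₂ : Type*} (E₁ : V₁ → V₁ → Prop) (E₂ : V₂ → V₂ → Prop)
    (h : V₁ → V₂) : Prop :=
  ∀ a b, E₁ a b → E₂ (h a) (h b)

/-- Weak reachability (connectivity by oriented paths) in a digraph. -/
def WeakReach {V : Type*} (E : V → V → Prop) : V → V → Prop :=
  Relation.ReflTransGen fun a b => E a b ∨ E b a

/-- Edge relation of the direct power of a digraph. -/
def powEdge {V : Type*} (k : ℕ) (E : V → V → Prop) :
    (Fin k → V) → (Fin k → V) → Prop :=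
  fun c d => ∀ i, E (c i) (d i)

/-- The directions of the edges of the oriented path `Q_S`: a single edge, then for
each `l` a single edge (if `l ∈ S`) or a zigzag (otherwise), then a single edge. -/
def QDirs (n : ℕ) (S : Finset (Fin n)) : List Bool :=
  true :: (((List.finRange n).flatMap fun l =>
    if l ∈ S then [true] else [true, false, true]) ++ [true])

/-- The edge relation of the oriented path whose edge directions are given by `ds`;
its vertices are `0, …, ds.length`, `0` being initial and `ds.length` terminal. -/
def pathEdge (ds : List Bool) : Fin (ds.length + 1) → Fin (ds.length + 1) → Prop :=
  fun a b => ∃ i : Fin ds.length,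
    if ds.get i = true then a = i.castSucc ∧ b = i.succ
    else a = i.succ ∧ b = i.castSucc

/-- The directions of the path `Q_{{i : d = r i}}` replacing the edge `(d, r)`. -/
def pathDirs {D : Type} [DecidableEq D] {n : ℕ} (d : D) (r : Fin n → D) : List Bool :=
  QDirs n (Finset.univ.filter fun i => d = r i)

/-- Internal vertices of the copies of the paths `Q_{{i : d = r i}}` in `𝒟(R)`. -/
structure InnerVert (D : Type) [DecidableEq D] (n : ℕ) (R : Set (Fin n → D)) where
  d : D
  r : Fin n → D
  hr : r ∈ R
  j : ℕ
  hj0 : 0 < j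
  hjlen : j < (pathDirs d r).length

/-- The vertex set of the digraph `𝒟(R)`: base vertices `D`, top vertices `R`, and
the internal vertices of the connecting oriented paths. -/
def DVert (D : Type) [DecidableEq D] (n : ℕ) (R : Set (Fin n → D)) : Type :=
  D ⊕ ({t : Fin n → D // t ∈ R} ⊕ InnerVert D n R)

/-- The `j`-th vertex of the copy of the path `Q_{{i : d = t i}}` joining `d` to `t`. -/
def pathVert {D : Type} [DecidableEq D] {n : ℕ} {R : Set (Fin n → D)}
    (d : D) (t : Fin n → D) (ht : t ∈ R) (j : ℕ) : DVert D n R :=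
  if hj0 : j = 0 then Sum.inl d
  else if hjl : (pathDirs d t).length ≤ j then Sum.inr (Sum.inl ⟨t, ht⟩)
  else Sum.inr (Sum.inr ⟨d, t, ht, j, Nat.pos_of_ne_zero hj0, not_le.mp hjl⟩)

/-- The edge relation of the digraph `𝒟(R)`. -/
def DEdge {D : Type} [DecidableEq D] {n : ℕ} {R : Set (Fin n → D)} :
    DVert D n R → DVert D n R → Prop :=
  fun a b => ∃ (d : D) (t : Fin n → D) (ht : t ∈ R) (i : ℕ)
      (hi : i < (pathDirs d t).length),
    if (pathDirs d t).get ⟨i, hi⟩ = true then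
      a = pathVert d t ht i ∧ b = pathVert d t ht (i + 1)
    else
      a = pathVert d t ht (i + 1) ∧ b = pathVert d t ht i

/-- A unary polymorphism of an `n`-ary relation `R`. -/
def IsUnaryPolymorphism {D : Type} {n : ℕ} (R : Set (Fin n → D)) (g : D → D) : Prop :=
  ∀ t ∈ R, (fun i => g (t i)) ∈ R

/-- The unary cost function `u` on the vertices of `𝒟(R)` associated to `ρ : R → ℚ≥0`. -/
def uFun {D : Type} [DecidableEq D] {n : ℕ} {R : Set (Fin n → D)}
    (ρ : {t : Fin n → D // t ∈ R} → ℚ≥0) : DVert D n R → ℚ≥0 :=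
  fun v => match v with
  | Sum.inl _ => 0
  | Sum.inr (Sum.inl t) => ρ t
  | Sum.inr (Sum.inr _) => 0

section Walks

variable {V : Type*} {E : V → V → Prop}

def Move (E : V → V → Prop) : Bool → V → V → Prop
  | true, a, b => E a b
  | false, a, b => E b a

def WordWalk (E : V → V → Prop) : List Bool → V → V → Prop
  | [], a, b => a = b
  | s :: w, a, b => ∃ x, Move E s a x ∧ WordWalk E w x b

def netLength (w : List Bool) : ℤ := (w.map fun s => if s then 1 else -1).sum

def reverseWord (w : List Bool) : List Bool := (w.map not).reverse

def upWord (m : ℕ) : List Bool := (List.replicate m [true, false, true]).flatten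

def downWord (m : ℕ) : List Bool := reverseWord (upWord m)

lemma upWord_succ (m : ℕ) : upWord (m + 1) = true :: false :: true :: upWord m := by
  simp [upWord, List.replicate_succ]

lemma netLength_nil : netLength [] = 0 := rfl

lemma netLength_cons (s : Bool) (w : List Bool) :
    netLength (s :: w) = (if s then 1 else -1) + netLength w := by
  simp [netLength]

lemma netLength_append (w w' : List Bool) :
    netLength (w ++ w') = netLength w + netLength w' := by
  simp [netLength]

lemma netLength_reverseWord (w : List Bool) : netLength (reverseWord w) = -netLength w := by
  induction w with
  | nil => rfl
  | cons s w ih =>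
    have hrev : reverseWord (s :: w) = reverseWord w ++ [!s] := by simp [reverseWord]
    rw [hrev, netLength_append, ih, netLength_cons, netLength_cons, netLength_nil]
    cases s <;> norm_num

lemma netLength_upWord (m : ℕ) : netLength (upWord m) = m := by
  induction m with
  | zero => rfl
  | succ m ih => simp only [upWord_succ, netLength_cons, ih]; push_cast; ring

lemma netLength_downWord (m : ℕ) : netLength (downWord m) = -m := by
  rw [downWord, netLength_reverseWord, netLength_upWord]

lemma Move.swap {s : Bool} {a b : V} (h : Move E s a b) : Move E (!s) b a := by
  cases s <;> exact h

lemma WordWalk.append {w w' : List Bool} {a b c : V} (h : WordWalk E w a b)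
    (h' : WordWalk E w' b c) : WordWalk E (w ++ w') a c := by
  induction w generalizing a with
  | nil => exact (show a = b from h) ▸ h'
  | cons s w ih =>
    obtain ⟨x, hx, hw⟩ := h
    exact ⟨x, hx, ih hw⟩

lemma WordWalk.reverse {w : List Bool} {a b : V} (h : WordWalk E w a b) :
    WordWalk E (reverseWord w) b a := by
  induction w generalizing a with
  | nil => exact (show a = b from h) ▸ rfl
  | cons s w ih =>
    obtain ⟨x, hx, hw⟩ := h
    simpa [reverseWord] using (ih hw).append (show WordWalk E [!s] x a from ⟨a, hx.swap, rfl⟩)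

lemma WordWalk.weakReach {w : List Bool} {a b : V} (h : WordWalk E w a b) : WeakReach E a b := by
  induction w generalizing a with
  | nil => exact (show a = b from h) ▸ Relation.ReflTransGen.refl
  | cons s w ih =>
    obtain ⟨x, hx, hw⟩ := h
    refine Relation.ReflTransGen.head ?_ (ih hw)
    cases s
    exacts [Or.inr hx, Or.inl hx]

lemma WordWalk.level_eq {lvl : V → ℕ} (hlvl : ∀ a b, E a b → lvl b = lvl a + 1)
    {w : List Bool} {a b : V} (h : WordWalk E w a b) :
    (lvl b : ℤ) = lvl a + netLength w := by
  induction w generalizing a with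
  | nil => simp [show a = b from h, netLength_nil]
  | cons s w ih =>
    obtain ⟨x, hx, hw⟩ := h
    rw [ih hw, netLength_cons]
    cases s
    · have := hlvl _ _ hx; simp only [Bool.false_eq_true, ite_false]; omega
    · have := hlvl _ _ hx; simp only [ite_true]; omega

lemma WordWalk.pow {k : ℕ} {w : List Bool} {c t : Fin k → V}
    (h : ∀ i, WordWalk E w (c i) (t i)) : WordWalk (powEdge k E) w c t := by
  induction w generalizing c with
  | nil => exact funext h
  | cons s w ih =>
    choose x hx hw using h
    refine ⟨x, ?_, ih hw⟩
    cases s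
    exacts [fun i => hx i, fun i => hx i]

lemma level_eq_of_weakReach_pow {lvl : V → ℕ} (hlvl : ∀ a b, E a b → lvl b = lvl a + 1)
    {k : ℕ} {c t : Fin k → V} (h : WeakReach (powEdge k E) c t)
    (hc : ∀ i j, lvl (c i) = lvl (c j)) : ∀ i j, lvl (t i) = lvl (t j) := by
  induction h with
  | refl => exact hc
  | tail _ hst ih =>
    intro i j
    rcases hst with h | h
    · rw [hlvl _ _ (h i), hlvl _ _ (h j), ih i j]
    · have := hlvl _ _ (h i); have := hlvl _ _ (h j); have := ih i j; omega

lemma weakReach_const_of_forall_wordWalk {lvl : V → ℕ}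
    (hlvl : ∀ a b, E a b → lvl b = lvl a + 1) {k : ℕ} {c : Fin k → V}
    (hc : ∀ i j, lvl (c i) = lvl (c j)) {x : V} {w : ℕ → List Bool}
    (hw : Function.Injective fun m => netLength (w m)) (h : ∀ i, ∃ m, WordWalk E (w m) x (c i)) :
    WeakReach (powEdge k E) (fun _ => x) c := by
  choose m hm using h
  rcases isEmpty_or_nonempty (Fin k) with hk | ⟨⟨i₀⟩⟩
  · exact Subsingleton.elim (fun _ => x) c ▸ Relation.ReflTransGen.refl
  refine (WordWalk.pow (w := w (m i₀)) fun i => ?_).weakReach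
  have hmi : m i = m i₀ := hw <| by
    have := (hm i).level_eq hlvl; have := (hm i₀).level_eq hlvl; have := hc i i₀
    simp only; omega
  exact hmi ▸ hm i

end Walks

section Blocks

variable {V : Type*} {E : V → V → Prop}

def block (b : Bool) : List Bool := if b then [true] else [true, false, true]

def blockWord (L : List Bool) : List Bool := L.flatMap block

lemma blockWord_cons (b : Bool) (L : List Bool) : blockWord (b :: L) = block b ++ blockWord L :=
  List.flatMap_cons

def IsPathAlong (E : V → V → Prop) (ds : List Bool) (pv : ℕ → V) : Prop :=
  ∀ j (hj : j < ds.length), Move E ds[j] (pv j) (pv (j + 1))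

def IsSinkAt (ds : List Bool) (j : ℕ) : Prop :=
  ∃ i, j = i + 1 ∧ ds[i]? = some true ∧ ds[j]? = some false

def IsSourceAt (ds : List Bool) (j : ℕ) : Prop :=
  ∃ i, j = i + 1 ∧ ds[i]? = some false ∧ ds[j]? = some true

lemma not_isSinkAt_zero (ds : List Bool) : ¬ IsSinkAt ds 0 :=
  fun ⟨_, h, _⟩ => Nat.succ_ne_zero _ h.symm

lemma not_isSourceAt_length (ds : List Bool) : ¬ IsSourceAt ds ds.length :=
  fun ⟨_, _, _, h⟩ => by simp at h

lemma IsPathAlong.shift {pre ds : List Bool} {pv : ℕ → V} (h : IsPathAlong E (pre ++ ds) pv) :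
    IsPathAlong E ds fun j => pv (pre.length + j) := by
  intro j hj
  have := h (pre.length + j) (by simp; omega)
  simpa [List.getElem_append_right, Nat.add_assoc] using this

lemma IsSinkAt.append_left {pre ds : List Bool} {j : ℕ} (h : IsSinkAt ds j) :
    IsSinkAt (pre ++ ds) (pre.length + j) := by
  obtain ⟨i, rfl, hi, hj⟩ := h
  refine ⟨pre.length + i, by omega, ?_, ?_⟩ <;>
    rwa [List.getElem?_append_right (by omega), Nat.add_sub_cancel_left]

lemma IsSourceAt.append_left {pre ds : List Bool} {j : ℕ} (h : IsSourceAt ds j) :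
    IsSourceAt (pre ++ ds) (pre.length + j) := by
  obtain ⟨i, rfl, hi, hj⟩ := h
  refine ⟨pre.length + i, by omega, ?_, ?_⟩ <;>
    rwa [List.getElem?_append_right (by omega), Nat.add_sub_cancel_left]

lemma exists_upWord_cons {a b c x y : V} (hab : E a b) (hcb : E c b) (hcx : E c x)
    (h : ∃ m, WordWalk E (upWord m) x y) : ∃ m, WordWalk E (upWord m) a y := by
  obtain ⟨m, hm⟩ := h
  exact ⟨m + 1, by rw [upWord_succ]; exact ⟨b, hab, c, hcb, x, hcx, hm⟩⟩

lemma IsPathAlong.wordWalk_upWord_length :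
    ∀ (L : List Bool) {pv : ℕ → V}, IsPathAlong E (blockWord L) pv →
      WordWalk E (upWord L.length) (pv 0) (pv (blockWord L).length)
  | [], _, _ => rfl
  | b :: L, pv, h => by
    rw [blockWord_cons] at h ⊢
    have ih := wordWalk_upWord_length L h.shift
    have e (j) (hj : j < (block b).length) := h j (by simp; omega)
    rw [List.length_cons, upWord_succ, List.length_append]
    cases b
    · exact ⟨pv 1, e 0 (by decide), pv 2, e 1 (by decide), pv 3, e 2 (by decide), ih⟩
    · exact ⟨pv 1, e 0 (by decide), pv 0, e 0 (by decide), pv 1, e 0 (by decide), ih⟩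

lemma IsPathAlong.exists_wordWalk_upWord :
    ∀ (L : List Bool) {pv : ℕ → V}, IsPathAlong E (blockWord L) pv → ∀ {j j' : ℕ}, j ≤ j' →
      j' ≤ (blockWord L).length → ¬ IsSinkAt (blockWord L) j →
      ¬ IsSourceAt (blockWord L) j' → ∃ m, WordWalk E (upWord m) (pv j) (pv j')
  | [], _, _, j, j', hjj', hj', _, _ => by
    obtain rfl : j = j' := by simp [blockWord] at hj'; omega
    exact ⟨0, rfl⟩
  | b :: L, pv, h, j, j', hjj', hj', hsink, hsource => by
    obtain rfl | hlt := hjj'.eq_or_lt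
    · exact ⟨0, rfl⟩
    rw [blockWord_cons] at h hj' hsink hsource
    have e (i) (hi : i < (block b).length) := h i (by simp; omega)
    have tail (hs : (block b).length ≤ j') :
        ∃ m, WordWalk E (upWord m) (pv (block b).length) (pv j') := by
      obtain ⟨i', rfl⟩ := Nat.exists_eq_add_of_le hs
      exact exists_wordWalk_upWord L h.shift (Nat.zero_le i') (by simp at hj'; omega)
        (not_isSinkAt_zero _) (fun hh => hsource hh.append_left)
    by_cases hjs : (block b).length ≤ j
    · obtain ⟨i, rfl⟩ := Nat.exists_eq_add_of_le hjs
      obtain ⟨i', rfl⟩ := Nat.exists_eq_add_of_le (hjs.trans hjj')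
      exact exists_wordWalk_upWord L h.shift (by omega) (by simp at hj'; omega)
        (fun hh => hsink hh.append_left) (fun hh => hsource hh.append_left)
    cases b
    · simp only [block, Bool.false_eq_true, ite_false, List.length_cons, List.length_nil]
        at hjs tail
      interval_cases j
      · obtain rfl | rfl | hj' : j' = 1 ∨ j' = 2 ∨ 3 ≤ j' := by omega
        · exact ⟨1, pv 1, e 0 (by decide), pv 0, e 0 (by decide), pv 1, e 0 (by decide), rfl⟩
        · exact absurd ⟨1, rfl, rfl, rfl⟩ hsource
        · exact exists_upWord_cons (e 0 (by decide)) (e 1 (by decide)) (e 2 (by decide))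
            (tail hj')
      · exact absurd ⟨0, rfl, rfl, rfl⟩ hsink
      · exact exists_upWord_cons (e 2 (by decide)) (e 2 (by decide)) (e 2 (by decide))
          (tail (by omega))
    · simp only [block, ite_true, List.length_cons, List.length_nil] at hjs tail
      obtain rfl : j = 0 := by omega
      exact exists_upWord_cons (e 0 (by decide)) (e 0 (by decide)) (e 0 (by decide))
        (tail (by omega))

end Blocks

section DigraphOfRelation

variable {D : Type} [DecidableEq D] {n : ℕ} {R : Set (Fin n → D)}

def pathBlocks (d : D) (t : Fin n → D) : List Bool :=
  true :: ((List.finRange n).map (fun l => decide (d = t l)) ++ [true])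

lemma length_pathBlocks (d : D) (t : Fin n → D) : (pathBlocks d t).length = n + 2 := by
  simp [pathBlocks]

lemma pathDirs_eq_blockWord (d : D) (t : Fin n → D) :
    pathDirs d t = blockWord (pathBlocks d t) := by
  simp only [pathDirs, QDirs, pathBlocks, blockWord, List.flatMap_cons, List.flatMap_append,
    List.flatMap_map, block, Finset.mem_filter, Finset.mem_univ, true_and, decide_eq_true_eq]
  rfl

lemma isPathAlong_pathVert (d : D) (t : Fin n → D) (ht : t ∈ R) :
    IsPathAlong DEdge (blockWord (pathBlocks d t)) (pathVert d t ht) := by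
  rw [← pathDirs_eq_blockWord]
  intro j hj
  cases h : (pathDirs d t)[j]
  · exact ⟨d, t, ht, j, hj, by simp [h]⟩
  · exact ⟨d, t, ht, j, hj, by simp [h]⟩

lemma pathVert_zero (d : D) (t : Fin n → D) (ht : t ∈ R) : pathVert d t ht 0 = Sum.inl d :=
  dif_pos rfl

lemma pathVert_length (d : D) (t : Fin n → D) (ht : t ∈ R) :
    pathVert d t ht (blockWord (pathBlocks d t)).length = Sum.inr (Sum.inl ⟨t, ht⟩) := by
  rw [← pathDirs_eq_blockWord]
  have : (pathDirs d t).length ≠ 0 := by simp [pathDirs, QDirs]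
  exact (dif_neg this).trans (dif_pos le_rfl)

lemma DEdge.exists_not_isSinkAt {a b : DVert D n R} (h : DEdge a b) :
    ∃ d t ht j, j ≤ (blockWord (pathBlocks d t)).length ∧ a = pathVert d t ht j ∧
      ¬ IsSinkAt (blockWord (pathBlocks d t)) j := by
  obtain ⟨d, t, ht, i, hi, h⟩ := h
  simp only [← pathDirs_eq_blockWord]
  refine ⟨d, t, ht, ?_⟩
  by_cases hb : (pathDirs d t)[i] = true
  · refine ⟨i, hi.le, (if_pos hb ▸ h).1, fun ⟨_, _, _, hf⟩ => ?_⟩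
    simp [List.getElem?_eq_getElem hi, hb] at hf
  · refine ⟨i + 1, hi, (if_neg hb ▸ h).1, fun ⟨_, hj, ht, _⟩ => ?_⟩
    obtain rfl := Nat.succ_injective hj
    simp [List.getElem?_eq_getElem hi, hb] at ht

lemma DEdge.exists_not_isSourceAt {a b : DVert D n R} (h : DEdge a b) :
    ∃ d t ht j, j ≤ (blockWord (pathBlocks d t)).length ∧ b = pathVert d t ht j ∧
      ¬ IsSourceAt (blockWord (pathBlocks d t)) j := by
  obtain ⟨d, t, ht, i, hi, h⟩ := h
  simp only [← pathDirs_eq_blockWord]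
  refine ⟨d, t, ht, ?_⟩
  by_cases hb : (pathDirs d t)[i] = true
  · refine ⟨i + 1, hi, (if_pos hb ▸ h).2, fun ⟨_, hj, hf, _⟩ => ?_⟩
    obtain rfl := Nat.succ_injective hj
    simp [List.getElem?_eq_getElem hi, hb] at hf
  · refine ⟨i, hi.le, (if_neg hb ▸ h).2, fun ⟨_, _, _, ht⟩ => ?_⟩
    simp [List.getElem?_eq_getElem hi, hb] at ht

lemma wordWalk_base_top (d : D) (t : Fin n → D) (ht : t ∈ R) :
    WordWalk DEdge (upWord (n + 2)) (Sum.inl d) (Sum.inr (Sum.inl ⟨t, ht⟩) : DVert D n R) := by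
  have h := (isPathAlong_pathVert d t ht).wordWalk_upWord_length
  rwa [length_pathBlocks, pathVert_zero, pathVert_length] at h

lemma exists_wordWalk_from_base {a b : DVert D n R} (h : DEdge a b) (d₀ : D) :
    ∃ m, WordWalk DEdge (upWord (n + 2) ++ downWord m) (Sum.inl d₀) a := by
  obtain ⟨d, t, ht, j, hj, rfl, hsink⟩ := h.exists_not_isSinkAt
  obtain ⟨m, hm⟩ := (isPathAlong_pathVert d t ht).exists_wordWalk_upWord _ hj le_rfl hsink
    (not_isSourceAt_length _)
  rw [pathVert_length] at hm
  exact ⟨m, (wordWalk_base_top d₀ t ht).append hm.reverse⟩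

lemma exists_wordWalk_from_top {a b : DVert D n R} (h : DEdge a b) {t₀ : Fin n → D}
    (ht₀ : t₀ ∈ R) :
    ∃ m, WordWalk DEdge (downWord (n + 2) ++ upWord m) (Sum.inr (Sum.inl ⟨t₀, ht₀⟩)) b := by
  obtain ⟨d, t, ht, j, hj, rfl, hsource⟩ := h.exists_not_isSourceAt
  obtain ⟨m, hm⟩ := (isPathAlong_pathVert d t ht).exists_wordWalk_upWord _ (Nat.zero_le j) hj
    (not_isSinkAt_zero _) hsource
  rw [pathVert_zero] at hm
  exact ⟨m, (wordWalk_base_top d t₀ ht₀).reverse.append hm⟩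

end DigraphOfRelation

theorem level_component_dichotomy_general {D : Type} [DecidableEq D] {n : ℕ}
    (R : Set (Fin n → D))
    (lvl : DVert D n R → ℕ)
    (hlvl : ∀ a b, DEdge a b → lvl b = lvl a + 1)
    (k : ℕ)
    (c : Fin k → DVert D n R) (hc : ∀ i j, lvl (c i) = lvl (c j)) :
    (∀ t : Fin k → DVert D n R, WeakReach (powEdge k DEdge) c t →
      ∀ i j, lvl (t i) = lvl (t j)) ∧
    ((∃ v : DVert D n R, WeakReach (powEdge k DEdge) (fun _ => v) c) ∨
      (∀ t : Fin k → DVert D n R, WeakReach (powEdge k DEdge) c t → t = c)) := by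
  refine ⟨fun t hct => level_eq_of_weakReach_pow hlvl hct hc, ?_⟩
  by_cases hsingle : ∀ t, WeakReach (powEdge k DEdge) c t → t = c
  · exact Or.inr hsingle
  simp only [not_forall] at hsingle
  obtain ⟨t, hct, hne⟩ := hsingle
  obtain ⟨i₀, -⟩ := Function.ne_iff.mp hne
  obtain rfl | ⟨c', hout | hin, -⟩ := hct.cases_head
  · exact absurd rfl hne
  · obtain ⟨d₀, -⟩ := hout i₀
    refine Or.inl ⟨Sum.inl d₀, weakReach_const_of_forall_wordWalk hlvl hc ?_
      fun i => exists_wordWalk_from_base (hout i) d₀⟩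
    intro m m' h
    simpa [netLength_append, netLength_upWord, netLength_downWord] using h
  · obtain ⟨-, t₀, ht₀, -⟩ := hin i₀
    refine Or.inl ⟨Sum.inr (Sum.inl ⟨t₀, ht₀⟩), weakReach_const_of_forall_wordWalk hlvl hc ?_
      fun i => exists_wordWalk_from_top (hin i) ht₀⟩
    intro m m' h
    simpa [netLength_append, netLength_upWord, netLength_downWord] using h

/-- if a weakly connected component of `𝒟(R)^k` contains a tuple all of
whose entries have the same level, then every tuple in that component has all entries
of the same level, and the component either equals the component `Δ_k` of the diagonal
or is a single vertex. -/
theorem level_component_dichotomy {D : Type} [Fintype D] [DecidableEq D] {n : ℕ}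
    (hn : 1 ≤ n) (R : Set (Fin n → D)) (hR : R.Nonempty)
    (lvl : DVert D n R → ℕ)
    (hlvl : ∀ a b, DEdge a b → lvl b = lvl a + 1)
    (hmin : ∃ v, lvl v = 0)
    (k : ℕ) (hk : 1 ≤ k)
    (c : Fin k → DVert D n R) (hc : ∀ i j, lvl (c i) = lvl (c j)) :
    (∀ t : Fin k → DVert D n R, WeakReach (powEdge k DEdge) c t →
      ∀ i j, lvl (t i) = lvl (t j)) ∧
    ((∃ v : DVert D n R, WeakReach (powEdge k DEdge) (fun _ => v) c) ∨
      (∀ t : Fin k → DVert D n R, WeakReach (powEdge k DEdge) c t → t = c)) :=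
  level_component_dichotomy_general R lvl hlvl k c hc
end

section
/- Let D be a finite set, R ⊆ D^n a nonempty n-ary relation, 𝒟 = 𝒟(R) the digraph constructed from R, and ⊑ the linear order on V^𝒟 defined from a suitable linear order on D × R. Let K and L be subsets of V^𝒟 with L ⊄ R such that: for every x ∈ K there is y' ∈ L with (x,y') an edge of 𝒟, and for every y ∈ L there is x' ∈ K with (x',y) an edge of 𝒟. If c is the ⊑-minimal element of K and d is the ⊑-minimal element of L, then (c,d) is an edge of 𝒟. -/
open scoped NNRat

/-- Membership of a vertex of `𝒟(R)` in the copy `P_e` of the path joining `e.1 ∈ D`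
to `e.2 ∈ R`. -/
def memP {D : Type} [DecidableEq D] {n : ℕ} {R : Set (Fin n → D)}
    (e : D × {t : Fin n → D // t ∈ R}) (x : DVert D n R) : Prop :=
  ∃ j : ℕ, j ≤ (pathDirs e.1 e.2.1).length ∧ x = pathVert e.1 e.2.1 e.2.2 j

/-- The position (distance from the initial vertex) of a vertex on the path `P_e`. -/
def posP {D : Type} [DecidableEq D] {n : ℕ} {R : Set (Fin n → D)}
    (e : D × {t : Fin n → D // t ∈ R}) : DVert D n R → ℕ :=
  fun x => match x with
  | Sum.inl _ => 0
  | Sum.inr (Sum.inl _) => (pathDirs e.1 e.2.1).length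
  | Sum.inr (Sum.inr iv) => iv.j

/-- The strict order `⊏` on the vertices of `𝒟(R)` determined by the level `lvl`,
a linear order `eord` on `D × R` and the map `ε = eps`. -/
def sqlt {D : Type} [DecidableEq D] {n : ℕ} {R : Set (Fin n → D)}
    (lvl : DVert D n R → ℕ)
    (eord : LinearOrder (D × {t : Fin n → D // t ∈ R}))
    (eps : DVert D n R → D × {t : Fin n → D // t ∈ R})
    (x y : DVert D n R) : Prop :=
  lvl x < lvl y ∨
    (lvl x = lvl y ∧ eord.lt (eps x) (eps y)) ∨
    (lvl x = lvl y ∧ eps x = eps y ∧ posP (eps x) x < posP (eps x) y)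

/-!
The levels of `𝒟(R)` are heights along the paths `P_e`: all of `D` sits on one level, and every
`P_e` climbs from there to `R` in `n + 2` steps, through single edges and zigzags `•→•←•→•`.
Pick `y' ∈ L` with `c → y'` and `x' ∈ K` with `x' → d`. Minimality of `c` and `d` forces
`lvl c = lvl x'` and `lvl d = lvl y'`, and `d ∉ R` because some element of `L` is not in `R`.
If `c ∈ D`, then `x' ∈ D` too, and convexity of the order on `D × R` in the first coordinate
forces `x' = c`. Otherwise all four vertices are inner, and minimality forces
`ε c = ε y' = ε x' = ε d`, so both edges lie on one path `P_e`, with `d` before `y'` on it.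
Two edges of `P_e` going up from the same level lie in a common zigzag, and there the tail of
the edge whose head comes later is also joined to the other head.
-/

/-- The height of the `j`-th vertex of the oriented path with edge directions `l` above its
initial vertex. -/
def hgt (l : List Bool) (j : ℕ) : ℤ :=
  (l.take j).count true - (l.take j).count false

@[simp]
lemma hgt_zero (l : List Bool) : hgt l 0 = 0 := by simp [hgt]

@[simp]
lemma hgt_cons_succ (b : Bool) (l : List Bool) (j : ℕ) :
    hgt (b :: l) (j + 1) = (if b then 1 else -1) + hgt l j := by
  cases b <;> simp [hgt] <;> ring

lemma hgt_succ {l : List Bool} {j : ℕ} (hj : j < l.length) :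
    hgt l (j + 1) = hgt l j + if l[j] then 1 else -1 := by
  induction l generalizing j with
  | nil => simp at hj
  | cons b l ih =>
    cases j with
    | zero => simp
    | succ j =>
      rw [hgt_cons_succ, hgt_cons_succ, ih (by simpa using hj)]
      simp only [List.getElem_cons_succ]
      ring

lemma hgt_eq_sub {l : List Bool} {j : ℕ} (hj : j ≤ l.length) :
    hgt l j = j - 2 * (l.take j).count false := by
  have := List.count_true_add_count_false (l.take j)
  rw [List.length_take_of_le hj] at this
  simp only [hgt]
  omega

/-- `u → v` is an edge of the oriented path with edge directions `l`. -/
def IsUpStep (l : List Bool) (u v : ℕ) : Prop :=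
  (v = u + 1 ∨ u = v + 1) ∧ u ≤ l.length ∧ v ≤ l.length ∧ hgt l v = hgt l u + 1

lemma isUpStep_of_lt {l : List Bool} {j : ℕ} (hj : j < l.length) :
    if l[j] then IsUpStep l j (j + 1) else IsUpStep l (j + 1) j := by
  have h := hgt_succ hj
  split_ifs at h ⊢ <;> exact ⟨by omega, by omega, by omega, by omega⟩

/-- The height of the lower end of the `i`-th edge. -/
def edgeHgt (l : List Bool) (i : ℕ) : ℤ := min (hgt l i) (hgt l (i + 1))

lemma hgt_true_cons (l : List Bool) (j : ℕ) : hgt (true :: l) (j + 1) = 1 + hgt l j := by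
  simp

lemma hgt_zigzag_cons (l : List Bool) (j : ℕ) :
    hgt (true :: false :: true :: l) (j + 3) = 1 + hgt l j := by
  simp

lemma edgeHgt_true_cons (l : List Bool) (i : ℕ) :
    edgeHgt (true :: l) (i + 1) = 1 + edgeHgt l i := by
  simp only [edgeHgt, hgt_true_cons, min_add_add_left]

lemma edgeHgt_zigzag_cons (l : List Bool) (i : ℕ) :
    edgeHgt (true :: false :: true :: l) (i + 3) = 1 + edgeHgt l i := by
  simp only [edgeHgt, hgt_zigzag_cons, min_add_add_left]

/-- The edge directions of a path made of `k` blocks, each a single edge or a zigzag,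
followed by a single edge. -/
inductive IsBlockPath : ℕ → List Bool → Prop
  | single : IsBlockPath 0 [true]
  | edge {k : ℕ} {l : List Bool} : IsBlockPath k l → IsBlockPath (k + 1) (true :: l)
  | zigzag {k : ℕ} {l : List Bool} :
      IsBlockPath k l → IsBlockPath (k + 1) (true :: false :: true :: l)

namespace IsBlockPath

variable {k : ℕ} {l : List Bool}

lemma hgt_nonneg (hl : IsBlockPath k l) (j : ℕ) : 0 ≤ hgt l j := by
  induction hl generalizing j with
  | single => rcases j with _ | _ | j <;> simp [hgt]
  | @edge _ l _ ih =>
    match j with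
    | 0 => simp
    | j + 1 => linarith [hgt_true_cons l j, ih j]
  | @zigzag _ l _ ih =>
    match j with
    | 0 | 1 | 2 => simp
    | j + 3 => linarith [hgt_zigzag_cons l j, ih j]

lemma edgeHgt_nonneg (hl : IsBlockPath k l) (i : ℕ) : 0 ≤ edgeHgt l i :=
  le_min (hl.hgt_nonneg i) (hl.hgt_nonneg (i + 1))

lemma hgt_length (hl : IsBlockPath k l) : hgt l l.length = k + 1 := by
  induction hl with
  | single => simp
  | @edge k l _ ih =>
    rw [List.length_cons, hgt_true_cons, ih]
    push_cast
    ring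
  | @zigzag k l _ ih =>
    rw [show (true :: false :: true :: l).length = l.length + 3 from rfl, hgt_zigzag_cons, ih]
    push_cast
    ring

lemma hgt_le_of_lt_length (hl : IsBlockPath k l) {j : ℕ} (hj : j < l.length) :
    hgt l j ≤ k := by
  induction hl generalizing j with
  | single => simp_all
  | @edge k l _ ih =>
    match j with
    | 0 => rw [hgt_zero]; positivity
    | j + 1 => push_cast; linarith [hgt_true_cons l j, ih (Nat.lt_of_succ_lt_succ hj)]
  | @zigzag k l _ ih =>
    match j with
    | 0 | 1 | 2 => simp <;> positivity
    | j + 3 =>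
      have : j < l.length := by simp only [List.length_cons] at hj; omega
      push_cast; linarith [hgt_zigzag_cons l j, ih this]

/-- The edges `i₁` and `i₂` lie in a common zigzag, starting at position `a`. -/
lemma exists_zigzag (hl : IsBlockPath k l) {i₁ i₂ : ℕ} (h12 : i₁ < i₂) (h2 : i₂ < l.length)
    (hh : edgeHgt l i₁ = edgeHgt l i₂) :
    ∃ a, a ≤ i₁ ∧ i₂ ≤ a + 2 ∧ hgt l a = edgeHgt l i₁ := by
  induction hl generalizing i₁ i₂ with
  | single => simp only [List.length_singleton] at h2; omega
  | @edge _ l hl ih =>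
    obtain ⟨i₂, rfl⟩ := Nat.exists_eq_add_of_le' (by omega : 1 ≤ i₂)
    rw [edgeHgt_true_cons] at hh
    rcases i₁ with _ | i₁
    · have := hl.edgeHgt_nonneg i₂
      have : edgeHgt (true :: l) 0 = 0 := by simp [edgeHgt]
      omega
    · rw [edgeHgt_true_cons, add_right_inj] at hh
      obtain ⟨a, ha₁, ha₂, ha⟩ := ih (by omega) (Nat.lt_of_succ_lt_succ h2) hh
      exact ⟨a + 1, by omega, by omega, by rw [hgt_true_cons, edgeHgt_true_cons, ha]⟩
  | @zigzag _ l hl ih =>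
    have head : ∀ i < 3, edgeHgt (true :: false :: true :: l) i = 0 := by
      intro i hi
      interval_cases i <;> simp [edgeHgt]
    rcases Nat.lt_or_ge i₂ 3 with hi₂ | hi₂
    · exact ⟨0, by omega, by omega, by simp [head i₁ (by omega)]⟩
    obtain ⟨i₂, rfl⟩ := Nat.exists_eq_add_of_le' hi₂
    rw [edgeHgt_zigzag_cons] at hh
    rcases Nat.lt_or_ge i₁ 3 with hi₁ | hi₁
    · have := hl.edgeHgt_nonneg i₂
      have := head i₁ hi₁
      omega
    obtain ⟨i₁, rfl⟩ := Nat.exists_eq_add_of_le' hi₁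
    rw [edgeHgt_zigzag_cons, add_right_inj] at hh
    have h2 : i₂ < l.length := by simp only [List.length_cons] at h2; omega
    obtain ⟨a, ha₁, ha₂, ha⟩ := ih (by omega) h2 hh
    exact ⟨a + 3, by omega, by omega, by rw [hgt_zigzag_cons, edgeHgt_zigzag_cons, ha]⟩

lemma isUpStep_of_isUpStep (hl : IsBlockPath k l) {u₁ v₁ u₂ v₂ : ℕ}
    (h₁ : IsUpStep l u₁ v₁) (h₂ : IsUpStep l u₂ v₂) (hu : hgt l u₁ = hgt l u₂)
    (hv : v₂ ≤ v₁) : IsUpStep l u₁ v₂ := by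
  have edgeHgt_min : ∀ {u v}, IsUpStep l u v → edgeHgt l (min u v) = hgt l u := by
    rintro u v ⟨h | h, -, -, h'⟩ <;> subst h <;> simp [edgeHgt, h']
  have e₁ := edgeHgt_min h₁
  have e₂ := edgeHgt_min h₂
  have p₁ := hgt_eq_sub h₁.2.1
  have p₂ := hgt_eq_sub h₂.2.1
  obtain ⟨hadj₁, hu₁, hv₁, hh₁⟩ := h₁
  obtain ⟨hadj₂, hu₂, hv₂, hh₂⟩ := h₂
  refine ⟨?_, hu₁, hv₂, by omega⟩
  -- Unless the two edges coincide, they lie in a zigzag starting at `a`; heights have the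
  -- parity of positions, so the tails are among `a, a + 2` and the heads among `a + 1, a + 3`.
  rcases lt_trichotomy (min u₁ v₁) (min u₂ v₂) with h | h | h
  · obtain ⟨a, ha₁, ha₂, ha⟩ := hl.exists_zigzag h (by omega) (by rw [e₁, e₂, hu])
    have := hgt_eq_sub (l := l) (j := a) (by omega)
    omega
  · omega
  · obtain ⟨a, ha₁, ha₂, ha⟩ := hl.exists_zigzag h (by omega) (by rw [e₁, e₂, hu])
    have := hgt_eq_sub (l := l) (j := a) (by omega)
    omega

end IsBlockPath

section QDirs

variable {n : ℕ} (S : Finset (Fin n))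

lemma isBlockPath_blocks (L : List (Fin n)) :
    IsBlockPath L.length
      ((L.flatMap fun l => if l ∈ S then [true] else [true, false, true]) ++ [true]) := by
  induction L with
  | nil => exact .single
  | cons l L ih =>
    by_cases h : l ∈ S
    · simpa [h] using ih.edge
    · simpa [h] using ih.zigzag

lemma isBlockPath_QDirs : IsBlockPath (n + 1) (QDirs n S) := by
  simpa [QDirs] using (isBlockPath_blocks S (List.finRange n)).edge

lemma hgt_QDirs_pos {j : ℕ} (hj : 0 < j) : 0 < hgt (QDirs n S) j := by
  obtain ⟨j, rfl⟩ := Nat.exists_eq_add_of_le' hj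
  have := (isBlockPath_blocks S (List.finRange n)).hgt_nonneg j
  rw [QDirs, hgt_true_cons]
  omega

end QDirs

/-- The index set `E = D × R` of the paths `P_e` making up `𝒟(R)`. -/
abbrev PathIdx (D : Type) (n : ℕ) (R : Set (Fin n → D)) : Type :=
  D × {t : Fin n → D // t ∈ R}

namespace PathIdx

variable {D : Type} [DecidableEq D] {n : ℕ} {R : Set (Fin n → D)} (e : PathIdx D n R)

def dirs : List Bool := pathDirs e.1 e.2.1

def vert (j : ℕ) : DVert D n R := pathVert e.1 e.2.1 e.2.2 j

@[simp]
lemma vert_zero : e.vert 0 = Sum.inl e.1 := rfl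

lemma vert_of_length_le {j : ℕ} (h0 : j ≠ 0) (hj : e.dirs.length ≤ j) :
    e.vert j = Sum.inr (Sum.inl e.2) :=
  (dif_neg h0).trans (dif_pos hj)

lemma vert_of_lt {j : ℕ} (h0 : 0 < j) (hj : j < e.dirs.length) :
    e.vert j = Sum.inr (Sum.inr ⟨e.1, e.2.1, e.2.2, j, h0, hj⟩) :=
  (dif_neg h0.ne').trans (dif_neg hj.not_ge)

lemma posP_vert (e' : PathIdx D n R) {j : ℕ} (h0 : 0 < j) (hj : j < e.dirs.length) :
    posP e' (e.vert j) = j := by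
  rw [e.vert_of_lt h0 hj]
  rfl

lemma isBlockPath_dirs : IsBlockPath (n + 1) e.dirs := isBlockPath_QDirs _

lemma hgt_dirs_length : hgt e.dirs e.dirs.length = n + 2 := by
  rw [e.isBlockPath_dirs.hgt_length]
  push_cast
  ring

lemma one_lt_length_dirs : 1 < e.dirs.length := by
  simp [dirs, pathDirs, QDirs]

lemma vert_length : e.vert e.dirs.length = Sum.inr (Sum.inl e.2) :=
  e.vert_of_length_le (by have := e.one_lt_length_dirs; omega) le_rfl

lemma isUpStep_zero_one : IsUpStep e.dirs 0 1 :=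
  ⟨.inl rfl, by omega, e.one_lt_length_dirs.le, by simp [dirs, pathDirs, QDirs]⟩

variable {e}

lemma hgt_dirs_pos_iff {j : ℕ} : 0 < hgt e.dirs j ↔ 0 < j := by
  refine ⟨fun h => Nat.pos_of_ne_zero ?_, hgt_QDirs_pos _⟩
  rintro rfl
  simp at h

lemma lt_length_of_hgt_le {j : ℕ} (hj : j ≤ e.dirs.length) (h : hgt e.dirs j ≤ n + 1) :
    j < e.dirs.length := by
  refine lt_of_le_of_ne hj ?_
  rintro rfl
  rw [hgt_dirs_length] at h
  omega

lemma fst_eq_of_vert_eq_inl {j : ℕ} {a : D} (h : e.vert j = Sum.inl a) : e.1 = a := by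
  rcases Nat.eq_zero_or_pos j with rfl | h0
  · exact Sum.inl.inj h
  by_cases hj : e.dirs.length ≤ j
  · rw [e.vert_of_length_le h0.ne' hj] at h
    exact absurd h Sum.inr_ne_inl
  · rw [e.vert_of_lt h0 (not_le.mp hj)] at h
    exact absurd h Sum.inr_ne_inl

lemma eq_of_vert_eq_vert {e' : PathIdx D n R} {i j : ℕ} (h : e.vert i = e'.vert j) (h0 : 0 < j)
    (hj : j < e'.dirs.length) : e = e' := by
  rw [e'.vert_of_lt h0 hj] at h
  rcases Nat.eq_zero_or_pos i with rfl | hi0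
  · exact absurd h Sum.inl_ne_inr
  by_cases hi : e.dirs.length ≤ i
  · rw [e.vert_of_length_le hi0.ne' hi] at h
    exact absurd (Sum.inr.inj h) Sum.inl_ne_inr
  · rw [e.vert_of_lt hi0 (not_le.mp hi)] at h
    injection h with h
    injection h with h
    injection h with h₁ h₂
    exact Prod.ext h₁ (Subtype.ext h₂)

end PathIdx

section Digraph

variable {D : Type} [DecidableEq D] {n : ℕ} {R : Set (Fin n → D)}

lemma DEdge.exists_isUpStep {x y : DVert D n R} (h : DEdge x y) :
    ∃ (e : PathIdx D n R) (u v : ℕ), IsUpStep e.dirs u v ∧ x = e.vert u ∧ y = e.vert v := by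
  obtain ⟨a, t, ht, i, hi, h⟩ := h
  have hstep := isUpStep_of_lt hi
  rw [List.get_eq_getElem] at h
  split_ifs at h hstep
  · exact ⟨(a, ⟨t, ht⟩), _, _, hstep, h⟩
  · exact ⟨(a, ⟨t, ht⟩), _, _, hstep, h⟩

lemma IsUpStep.dEdge_vert {e : PathIdx D n R} {u v : ℕ} (h : IsUpStep e.dirs u v) :
    DEdge (e.vert u) (e.vert v) := by
  obtain ⟨rfl | rfl, hu, hv, hh⟩ := h
  · have hu : u < e.dirs.length := by omega
    have hdir : e.dirs[u] = true := by
      have := hgt_succ hu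
      split_ifs at this with hdir
      · exact hdir
      · omega
    exact ⟨e.1, e.2.1, e.2.2, u, hu, (if_pos hdir).mpr ⟨rfl, rfl⟩⟩
  · have hv : v < e.dirs.length := by omega
    have hdir : ¬e.dirs[v] = true := by
      have := hgt_succ hv
      split_ifs at this with hdir
      · omega
      · exact hdir
    exact ⟨e.1, e.2.1, e.2.2, v, hv, (if_neg hdir).mpr ⟨rfl, rfl⟩⟩

end Digraph

section Level

variable {D : Type} [DecidableEq D] {n : ℕ} {R : Set (Fin n → D)} {lvl : DVert D n R → ℕ}
  (hlvl : ∀ a b, DEdge a b → lvl b = lvl a + 1)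
include hlvl

lemma lvl_vert (e : PathIdx D n R) {j : ℕ} (hj : j ≤ e.dirs.length) :
    (lvl (e.vert j) : ℤ) = lvl (Sum.inl e.1) + hgt e.dirs j := by
  induction j with
  | zero => simp
  | succ j ih =>
    have hj' : j < e.dirs.length := by omega
    have hstep := isUpStep_of_lt hj'
    split_ifs at hstep <;> linarith [ih hj'.le, hstep.2.2.2, hlvl _ _ hstep.dEdge_vert]

lemma lvl_vert_sub_lvl_vert (e e' : PathIdx D n R) {j j' : ℕ} (hj : j ≤ e.dirs.length)
    (hj' : j' ≤ e'.dirs.length) :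
    (lvl (e.vert j) : ℤ) - lvl (e'.vert j') = hgt e.dirs j - hgt e'.dirs j' := by
  -- `D` lies on one level: every `a ∈ D` is joined to the top vertex `e.2` by a path of
  -- height `n + 2`.
  have hbase : ∀ a : D, (lvl (Sum.inl a) : ℤ) + (n + 2) = lvl (Sum.inr (Sum.inl e.2)) := by
    intro a
    have := lvl_vert hlvl (a, e.2) le_rfl
    rw [PathIdx.vert_length, PathIdx.hgt_dirs_length] at this
    exact this.symm
  rw [lvl_vert hlvl e hj, lvl_vert hlvl e' hj']
  linarith [hbase e.1, hbase e'.1]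

lemma lvl_le_of_not_top {x y : DVert D n R} (hxy : DEdge x y)
    (hy : ¬∃ t, y = Sum.inr (Sum.inl t)) (e : PathIdx D n R) :
    (lvl y : ℤ) ≤ lvl (Sum.inl e.1) + (n + 1) := by
  obtain ⟨e₀, u, v, huv, -, rfl⟩ := hxy.exists_isUpStep
  have hv : v < e₀.dirs.length :=
    lt_of_le_of_ne huv.2.2.1 (by rintro rfl; exact hy ⟨_, e₀.vert_length⟩)
  have h₁ := lvl_vert_sub_lvl_vert hlvl e₀ e (j' := 0) hv.le (Nat.zero_le _)
  have h₂ := e₀.isBlockPath_dirs.hgt_le_of_lt_length hv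
  rw [hgt_zero, PathIdx.vert_zero] at h₁
  push_cast at h₂
  linarith

end Level

section Order

variable {D : Type} [DecidableEq D] {n : ℕ} {R : Set (Fin n → D)} {lvl : DVert D n R → ℕ}
  {eord : LinearOrder (PathIdx D n R)} {eps : DVert D n R → PathIdx D n R}
  {x y : DVert D n R}

lemma sqlt.lvl_le (h : sqlt lvl eord eps x y) : lvl x ≤ lvl y := by
  rcases h with h | ⟨h, -⟩ | ⟨h, -⟩ <;> omega

lemma sqlt.eps_le (h : sqlt lvl eord eps x y) (hl : lvl x = lvl y) :
    eord.le (eps x) (eps y) := by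
  let _ := eord
  rcases h with h | ⟨-, h⟩ | ⟨-, h, -⟩
  · omega
  · exact h.le
  · exact h.le

lemma sqlt.posP_lt (h : sqlt lvl eord eps x y) (hl : lvl x = lvl y) (he : eps x = eps y) :
    posP (eps x) x < posP (eps x) y := by
  let _ := eord
  rcases h with h | ⟨-, h⟩ | ⟨-, -, h⟩
  · omega
  · exact absurd he h.ne
  · exact h

lemma lvl_le_of_eq_or_sqlt (h : y = x ∨ sqlt lvl eord eps x y) : lvl x ≤ lvl y :=
  h.elim (fun h => h ▸ le_rfl) sqlt.lvl_le

end Order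

section Minimal

variable {D : Type} [DecidableEq D] {n : ℕ} {R : Set (Fin n → D)} {lvl : DVert D n R → ℕ}
  {eord : LinearOrder (PathIdx D n R)} {eps : DVert D n R → PathIdx D n R}
  (heps₁ : ∀ x, memP (eps x) x)
include heps₁

lemma fst_eps_inl (a : D) : (eps (Sum.inl a)).1 = a := by
  obtain ⟨j, -, h⟩ := heps₁ (Sum.inl a)
  exact PathIdx.fst_eq_of_vert_eq_inl h.symm

lemma eps_vert {e : PathIdx D n R} {j : ℕ} (h0 : 0 < j) (hj : j < e.dirs.length) :
    eps (e.vert j) = e := by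
  obtain ⟨i, -, h⟩ := heps₁ (e.vert j)
  exact PathIdx.eq_of_vert_eq_vert h.symm h0 hj

lemma dEdge_of_hgt_eq_zero
    (hconv : ∀ (d₁ d₂ : D) (t₁ t₂ t₃ : {t : Fin n → D // t ∈ R}),
      eord.le (d₁, t₁) (d₂, t₂) → eord.le (d₂, t₂) (d₁, t₃) → d₁ = d₂)
    (heps₂ : ∀ x e, memP e x → eord.le (eps x) e)
    {e e' : PathIdx D n R} {u v u' v' : ℕ}
    (huv : IsUpStep e.dirs u v) (huv' : IsUpStep e'.dirs u' v')
    (hu : hgt e.dirs u = 0) (hh : hgt e.dirs u = hgt e'.dirs u')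
    (hc : eord.le (eps (e.vert u)) (eps (e'.vert u')))
    (hd : eord.le (eps (e'.vert v')) (eps (e.vert v))) :
    DEdge (e.vert u) (e'.vert v') := by
  let _ := eord
  have zero_one : ∀ {f : PathIdx D n R} {u v : ℕ}, IsUpStep f.dirs u v → hgt f.dirs u = 0 →
      u = 0 ∧ v = 1 := by
    intro f u v h hu
    have := (f.hgt_dirs_pos_iff (j := u)).not
    obtain ⟨_, _, _, _⟩ := h
    omega
  obtain ⟨rfl, rfl⟩ := zero_one huv hu
  obtain ⟨rfl, rfl⟩ := zero_one huv' (hh ▸ hu)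
  have eps_one : ∀ f : PathIdx D n R, eps (f.vert 1) = f :=
    fun f => eps_vert heps₁ one_pos f.one_lt_length_dirs
  have eps_inl : ∀ a, eps (Sum.inl a) = (a, (eps (Sum.inl a)).2) :=
    fun a => Prod.ext (fst_eps_inl heps₁ a) rfl
  rw [eps_one, eps_one] at hd
  simp only [PathIdx.vert_zero] at hc ⊢
  have hfst : e.1 = e'.1 := by
    refine hconv e.1 e'.1 (eps (Sum.inl e.1)).2 (eps (Sum.inl e'.1)).2 e.2 ?_ ?_
    · rwa [← eps_inl, ← eps_inl]
    · rw [← eps_inl]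
      exact (heps₂ _ e' ⟨0, Nat.zero_le _, rfl⟩).trans hd
  rw [hfst, ← e'.vert_zero]
  exact e'.isUpStep_zero_one.dEdge_vert

lemma dEdge_of_hgt_pos {e e' : PathIdx D n R} {u v u' v' : ℕ}
    (huv : IsUpStep e.dirs u v) (huv' : IsUpStep e'.dirs u' v')
    (hu : 0 < hgt e.dirs u) (hh : hgt e.dirs u = hgt e'.dirs u')
    (hv' : hgt e'.dirs v' ≤ n + 1)
    (hc : eord.le (eps (e.vert u)) (eps (e'.vert u')))
    (hd : sqlt lvl eord eps (e'.vert v') (e.vert v)) (hl : lvl (e'.vert v') = lvl (e.vert v)) :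
    DEdge (e.vert u) (e'.vert v') := by
  let _ := eord
  have hv := huv.2.2.2
  have hv'' := huv'.2.2.2
  have inner : ∀ {f : PathIdx D n R} {j : ℕ}, j ≤ f.dirs.length → 0 < hgt f.dirs j →
      hgt f.dirs j ≤ n + 1 → 0 < j ∧ j < f.dirs.length := fun {f _} hj h₁ h₂ =>
    ⟨f.hgt_dirs_pos_iff.mp h₁, PathIdx.lt_length_of_hgt_le hj h₂⟩
  obtain ⟨hu₀, hu₁⟩ := inner huv.2.1 hu (by omega)
  obtain ⟨hv₀, hv₁⟩ := inner huv.2.2.1 (by omega) (by omega)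
  obtain ⟨hu₀', hu₁'⟩ := inner huv'.2.1 (by omega) (by omega)
  obtain ⟨hv₀', hv₁'⟩ := inner huv'.2.2.1 (by omega) hv'
  have he : e' = e := by
    have hd' := hd.eps_le hl
    rw [eps_vert heps₁ hu₀ hu₁, eps_vert heps₁ hu₀' hu₁'] at hc
    rw [eps_vert heps₁ hv₀ hv₁, eps_vert heps₁ hv₀' hv₁'] at hd'
    exact le_antisymm hd' hc
  subst he
  have hpos := hd.posP_lt hl (by rw [eps_vert heps₁ hv₀ hv₁, eps_vert heps₁ hv₀' hv₁'])
  rw [e'.posP_vert _ hv₀ hv₁, e'.posP_vert _ hv₀' hv₁'] at hpos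
  exact (e'.isBlockPath_dirs.isUpStep_of_isUpStep huv huv' hh hpos.le).dEdge_vert

end Minimal

theorem minimal_elements_edge_general {D : Type} [DecidableEq D] {n : ℕ}
    (R : Set (Fin n → D))
    (lvl : DVert D n R → ℕ)
    (hlvl : ∀ a b, DEdge a b → lvl b = lvl a + 1)
    (eord : LinearOrder (D × {t : Fin n → D // t ∈ R}))
    (hconv : ∀ (d₁ d₂ : D) (t₁ t₂ t₃ : {t : Fin n → D // t ∈ R}),
      eord.le (d₁, t₁) (d₂, t₂) → eord.le (d₂, t₂) (d₁, t₃) → d₁ = d₂)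
    (eps : DVert D n R → D × {t : Fin n → D // t ∈ R})
    (heps₁ : ∀ x, memP (eps x) x)
    (heps₂ : ∀ x e, memP e x → eord.le (eps x) e)
    (K L : Set (DVert D n R))
    (hL : ¬ L ⊆ {x : DVert D n R | ∃ t, x = Sum.inr (Sum.inl t)})
    (hKL : ∀ x ∈ K, ∃ y' ∈ L, DEdge x y')
    (hLK : ∀ y ∈ L, ∃ x' ∈ K, DEdge x' y)
    (c d : DVert D n R)
    (hcK : c ∈ K) (hcmin : ∀ x ∈ K, x = c ∨ sqlt lvl eord eps c x)
    (hdL : d ∈ L) (hdmin : ∀ y ∈ L, y = d ∨ sqlt lvl eord eps d y) :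
    DEdge c d := by
  obtain ⟨y', hy'L, hcy'⟩ := hKL c hcK
  obtain ⟨x', hx'K, hx'd⟩ := hLK d hdL
  have hle₁ := lvl_le_of_eq_or_sqlt (hcmin x' hx'K)
  have hle₂ := lvl_le_of_eq_or_sqlt (hdmin y' hy'L)
  have hlc : lvl c = lvl x' := by linarith [hlvl _ _ hcy', hlvl _ _ hx'd]
  have hld : lvl d = lvl y' := by linarith [hlvl _ _ hcy', hlvl _ _ hx'd]
  rcases hdmin y' hy'L with rfl | hdy'
  · exact hcy'
  rcases hcmin x' hx'K with rfl | hcx'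
  · exact hx'd
  obtain ⟨y₀, hy₀L, hy₀⟩ := Set.not_subset.mp hL
  obtain ⟨x₀, -, hx₀y₀⟩ := hLK y₀ hy₀L
  have hdy₀ := lvl_le_of_eq_or_sqlt (hdmin y₀ hy₀L)
  obtain ⟨e, u, v, huv, rfl, rfl⟩ := hcy'.exists_isUpStep
  obtain ⟨e', u', v', huv', rfl, rfl⟩ := hx'd.exists_isUpStep
  have hh := lvl_vert_sub_lvl_vert hlvl e e' huv.2.1 huv'.2.1
  have hv' := lvl_vert hlvl e' huv'.2.2.1
  have htop := lvl_le_of_not_top hlvl hx₀y₀ hy₀ e'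
  rcases (e.isBlockPath_dirs.hgt_nonneg u).eq_or_lt with hu | hu
  · exact dEdge_of_hgt_eq_zero heps₁ hconv heps₂ huv huv' hu.symm (by omega)
      (hcx'.eps_le hlc) (hdy'.eps_le hld)
  · exact dEdge_of_hgt_pos heps₁ huv huv' hu (by omega) (by omega)
      (hcx'.eps_le hlc) hdy' hld

/-- if `K`, `L ⊆ V^𝒟` with `L ⊄ R`, each `x ∈ K` has an edge to some
`y' ∈ L` and each `y ∈ L` an edge from some `x' ∈ K`, then the `⊑`-minimal elements
`c` of `K` and `d` of `L` are joined by an edge `(c, d)`. -/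
theorem minimal_elements_edge {D : Type} [Fintype D] [DecidableEq D] {n : ℕ}
    (hn : 1 ≤ n) (R : Set (Fin n → D)) (hR : R.Nonempty)
    (lvl : DVert D n R → ℕ)
    (hlvl : ∀ a b, DEdge a b → lvl b = lvl a + 1)
    (hmin : ∃ v, lvl v = 0)
    (eord : LinearOrder (D × {t : Fin n → D // t ∈ R}))
    (hconv : ∀ (d₁ d₂ : D) (t₁ t₂ t₃ : {t : Fin n → D // t ∈ R}),
      eord.le (d₁, t₁) (d₂, t₂) → eord.le (d₂, t₂) (d₁, t₃) → d₁ = d₂)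
    (eps : DVert D n R → D × {t : Fin n → D // t ∈ R})
    (heps₁ : ∀ x, memP (eps x) x)
    (heps₂ : ∀ x e, memP e x → eord.le (eps x) e)
    (K L : Set (DVert D n R))
    (hL : ¬ L ⊆ {x : DVert D n R | ∃ t, x = Sum.inr (Sum.inl t)})
    (hKL : ∀ x ∈ K, ∃ y' ∈ L, DEdge x y')
    (hLK : ∀ y ∈ L, ∃ x' ∈ K, DEdge x' y)
    (c d : DVert D n R)
    (hcK : c ∈ K) (hcmin : ∀ x ∈ K, x = c ∨ sqlt lvl eord eps c x)
    (hdL : d ∈ L) (hdmin : ∀ y ∈ L, y = d ∨ sqlt lvl eord eps d y) :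
    DEdge c d :=
  minimal_elements_edge_general R lvl hlvl eord hconv eps heps₁ heps₂ K L hL hKL hLK c d hcK hcmin
    hdL hdmin
end
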